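/- Let T̂ₖ = R₂ eₖ t₃ᵀ − t₂ eₖᵀ R₃ᵀ (k = 1,2,3) be the correlation slices of a calibrated trifocal tensor, with R₂, R₃ ∈ SO(3, ℂ) and t₂, t₃ ∈ ℂ³. Then for any α, β, γ ∈ ℂ with α² + β² + γ² = 0 and (α,β,γ) ≠ 0, the matrix S = α T̂₁ + β T̂₂ + γ T̂₃ is a trifocal essential matrix, i.e., S = s₁ u₁ᵀ + u₂ s₂ᵀ with s₁, s₂ nonzero isotropic vectors (sₖᵀ sₖ = 0). -/
import Mathlib


open Matrix

def IsTrifocalEssential (S : Matrix (Fin 3) (Fin 3) ℂ) : Prop :=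
  ∃ s₁ u₁ u₂ s₂ : Fin 3 → ℂ, s₁ ≠ 0 ∧ s₂ ≠ 0 ∧ s₁ ⬝ᵥ s₁ = 0 ∧ s₂ ⬝ᵥ s₂ = 0 ∧
    S = vecMulVec s₁ u₁ + vecMulVec u₂ s₂

lemma aux_ne (R : Matrix (Fin 3) (Fin 3) ℂ) (hR : Rᵀ * R = 1) (v : Fin 3 → ℂ)
    (hv : v ≠ 0) : R.mulVec v ≠ 0 := by
  intro h
  apply hv
  have : Rᵀ.mulVec (R.mulVec v) = v := by
    rw [Matrix.mulVec_mulVec, hR, Matrix.one_mulVec]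
  rw [h, Matrix.mulVec_zero] at this
  exact this.symm

lemma aux_iso (R : Matrix (Fin 3) (Fin 3) ℂ) (hR : Rᵀ * R = 1) (v : Fin 3 → ℂ) :
    R.mulVec v ⬝ᵥ R.mulVec v = v ⬝ᵥ v := by
  rw [Matrix.dotProduct_mulVec, ← Matrix.mulVec_transpose, Matrix.mulVec_mulVec, hR,
    Matrix.one_mulVec]

theorem stmt_11 (R₂ R₃ : Matrix (Fin 3) (Fin 3) ℂ)
    (hR₂ : R₂ * R₂ᵀ = 1) (hdR₂ : R₂.det = 1)
    (hR₃ : R₃ * R₃ᵀ = 1) (hdR₃ : R₃.det = 1)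
    (t₂ t₃ : Fin 3 → ℂ)
    (T : Fin 3 → Matrix (Fin 3) (Fin 3) ℂ)
    (hT : ∀ k, T k = vecMulVec (R₂.mulVec (Pi.single k 1)) t₃ -
        vecMulVec t₂ (R₃.mulVec (Pi.single k 1)))
    (α β γ : ℂ) (hiso : α ^ 2 + β ^ 2 + γ ^ 2 = 0) (hne : ¬(α = 0 ∧ β = 0 ∧ γ = 0)) :
    IsTrifocalEssential (α • T 0 + β • T 1 + γ • T 2) := by
  set v : Fin 3 → ℂ := ![α, β, γ] with hvdef
  have hv : v ≠ 0 := by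
    intro h
    apply hne
    refine ⟨?_, ?_, ?_⟩
    · have := congrFun h 0; simpa [hvdef] using this
    · have := congrFun h 1; simpa [hvdef] using this
    · have := congrFun h 2; simpa [hvdef] using this
  have hvv : v ⬝ᵥ v = 0 := by
    simp [hvdef, dotProduct, Fin.sum_univ_three]
    linear_combination hiso
  have hR₂' : R₂ᵀ * R₂ = 1 := mul_eq_one_comm.mp hR₂
  have hR₃' : R₃ᵀ * R₃ = 1 := mul_eq_one_comm.mp hR₃
  refine ⟨R₂.mulVec v, t₃, t₂, -(R₃.mulVec v), aux_ne R₂ hR₂' v hv, ?_, ?_, ?_, ?_⟩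
  · simpa using aux_ne R₃ hR₃' v hv
  · rw [aux_iso R₂ hR₂' v]; exact hvv
  · rw [dotProduct_neg, neg_dotProduct, neg_neg, aux_iso R₃ hR₃' v]
    exact hvv
  · ext i j
    simp [hT, vecMulVec_apply, Matrix.mulVec, dotProduct, Fin.sum_univ_three,
      Pi.single_apply, hvdef]
    ring
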